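/- Any feasible point x of the LP with s = (0,1,2,2,3), g = (0,−2,0,−1,3) (i.e., x ∈ ℝ⁵, x ≥ 0, ∑ xᵢ = 1, ⟨g,x⟩ ≤ 0) satisfies (1/3)·⟨s, x⟩ ≤ 3/4. -/
import Mathlib


/-- The vector s = (0,1,2,2,3). -/
def sVec : Fin 5 → ℝ := ![0, 1, 2, 2, 3]

/-- The vector g = (0,−2,0,−1,3). -/
def gVec : Fin 5 → ℝ := ![0, -2, 0, -1, 3]

/-- Any feasible point of the LP satisfies (1/3)·⟨s,x⟩ ≤ 3/4. -/
theorem lp_upper_bound (x : Fin 5 → ℝ) (hx0 : ∀ i, 0 ≤ x i) (hx1 : ∑ i, x i = 1)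
    (hxg : ∑ i, gVec i * x i ≤ 0) :
    (1 / 3) * ∑ i, sVec i * x i ≤ 3 / 4 := by
  simp only [sVec, gVec, Fin.sum_univ_five, Matrix.cons_val_zero, Matrix.cons_val_one,
    Matrix.head_cons, Matrix.cons_val_two, Matrix.tail_cons, Matrix.cons_val_three,
    Matrix.cons_val_four] at *
  have h0 := hx0 0; have h1 := hx0 1; have h2 := hx0 2; have h3 := hx0 3; have h4 := hx0 4
  linarith
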